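/- Let Q > 0, let h : ℂ → ℝ be continuous, let ε > 0, let C = 2^k for some k ∈ ℤ be a dyadic scaling factor, and let a ∈ ℝ. Define g : ℂ → ℝ by g(w) := h(w/C) − a and set ε' := C^Q · e^{−a} · ε. Then a dyadic square S belongs to S_h^ε(ℂ) if and only if CS belongs to S_g^{ε'}(ℂ); consequently D_g^{ε'}(Cz, Cw) = D_h^ε(z,w) for all z, w ∈ ℂ. -/

import Mathlib

open MeasureTheory Real Set

noncomputable section

/-- A closed axis-parallel square in the plane (identified with `ℂ`),
given by its bottom-left corner `(x, y)` and its positive side length. -/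
structure DySquare where
  x : ℝ
  y : ℝ
  side : ℝ
  side_pos : 0 < side

namespace DySquare

/-- The closed square as a subset of `ℂ`. -/
def toSet (S : DySquare) : Set ℂ :=
  {z : ℂ | S.x ≤ z.re ∧ z.re ≤ S.x + S.side ∧ S.y ≤ z.im ∧ z.im ≤ S.y + S.side}

/-- The center `v_S` of the square. -/
def center (S : DySquare) : ℂ :=
  ⟨S.x + S.side / 2, S.y + S.side / 2⟩

/-- A square is dyadic if its side length is `2^{-n}` for some `n : ℤ`
and its corners lie in `2^{-n} ℤ²`. -/
def IsDyadic (S : DySquare) : Prop :=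
  ∃ n : ℤ, S.side = 2 ^ (-n) ∧ ∃ a b : ℤ, S.x = a * 2 ^ (-n) ∧ S.y = b * 2 ^ (-n)

end DySquare

/-- The circle average `h_r(z)` of a function `h : ℂ → ℝ`. -/
def circleAvg (h : ℂ → ℝ) (r : ℝ) (z : ℂ) : ℝ :=
  (2 * π)⁻¹ * ∫ θ in (0:ℝ)..(2 * π), h (z + (r : ℂ) * Complex.exp ((θ : ℂ) * Complex.I))

/-- `M_h(S) = exp(h_{|S|/2}(v_S)) |S|^Q`, the "LQG size" of the square `S`. -/
def Mass (h : ℂ → ℝ) (Q : ℝ) (S : DySquare) : ℝ :=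
  Real.exp (circleAvg h (S.side / 2) S.center) * S.side ^ Q

/-- The dyadic tiling `𝒮_h^ε(U)`: dyadic squares `S ⊆ U` with `M_h(S) ≤ ε` such that
every strictly larger dyadic square `S'` with `S ⊊ S' ⊆ U` satisfies `M_h(S') > ε`. -/
def Tiling (h : ℂ → ℝ) (Q ε : ℝ) (U : Set ℂ) : Set DySquare :=
  {S | S.IsDyadic ∧ S.toSet ⊆ U ∧ Mass h Q S ≤ ε ∧
    ∀ S' : DySquare, S'.IsDyadic → S.toSet ⊂ S'.toSet → S'.toSet ⊆ U → ε < Mass h Q S'}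

/-- There is a chain of `k+1` squares of `𝒮_h^ε(U)` from a square containing `z` to a
square containing `w`, consecutive squares being equal or adjacent (i.e. their
intersection contains more than one point). -/
def HasChain (h : ℂ → ℝ) (Q ε : ℝ) (U : Set ℂ) (z w : ℂ) (k : ℕ) : Prop :=
  ∃ S : ℕ → DySquare, (∀ j ≤ k, S j ∈ Tiling h Q ε U) ∧
    z ∈ (S 0).toSet ∧ w ∈ (S k).toSet ∧
    ∀ j, 1 ≤ j → j ≤ k → ((S (j - 1)).toSet ∩ (S j).toSet).Nontrivial

/-- The graph distance `D_h^ε(z, w; U)`, with value `∞` if no finite chain exists. -/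
def GDist (h : ℂ → ℝ) (Q ε : ℝ) (U : Set ℂ) (z w : ℂ) : ℕ∞ :=
  sInf {n : ℕ∞ | ∃ k : ℕ, n = (k : ℕ∞) ∧ HasChain h Q ε U z w k}


/-- Scaling a square by a positive factor `C`. -/
def DySquare.scale (C : ℝ) (hC : 0 < C) (S : DySquare) : DySquare :=
  ⟨C * S.x, C * S.y, C * S.side, mul_pos hC S.side_pos⟩

/-!
Multiplication by `C = 2^k` permutes the dyadic squares and preserves strict inclusion, while the
substitution `u ↦ u / C` in the circle average gives `g_{Cr}(Cz) = h_r(z) - a`, hence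
`M_g(CS) = C^Q e^{-a} M_h(S)`. So the conditions defining `𝒮_h^ε` and `𝒮_g^{ε'}` correspond
square by square, and scaling carries chains of adjacent squares to chains of adjacent squares.
-/

namespace DySquare

variable {C : ℝ}

lemma mem_scale_iff (hC : 0 < C) (S : DySquare) (w : ℂ) :
    (C : ℂ) * w ∈ (S.scale C hC).toSet ↔ w ∈ S.toSet := by
  simp only [toSet, scale, mem_ofPred_eq, Complex.mul_re, Complex.mul_im, Complex.ofReal_re,
    Complex.ofReal_im, zero_mul, sub_zero, add_zero, mul_le_mul_iff_right₀ hC, ← mul_add]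

lemma toSet_scale (hC : 0 < C) (S : DySquare) :
    (S.scale C hC).toSet = (fun w => (C : ℂ) * w) '' S.toSet := by
  have hC0 : (C : ℂ) ≠ 0 := by exact_mod_cast hC.ne'
  ext z
  rw [← mul_div_cancel₀ z hC0, mem_scale_iff, (mul_right_injective₀ hC0).mem_set_image]

lemma scale_inv_scale (hC : 0 < C) (S : DySquare) :
    (S.scale C⁻¹ (inv_pos.2 hC)).scale C hC = S := by
  cases S
  simp [scale, mul_inv_cancel_left₀ hC.ne']

lemma scale_scale_inv (hC : 0 < C) (S : DySquare) :
    (S.scale C hC).scale C⁻¹ (inv_pos.2 hC) = S := by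
  simpa using scale_inv_scale (inv_pos.2 hC) S

lemma scale_surjective (hC : 0 < C) : Function.Surjective (scale C hC) :=
  fun S => ⟨_, scale_inv_scale hC S⟩

lemma scale_ssubset_scale_iff (hC : 0 < C) (S T : DySquare) :
    (S.scale C hC).toSet ⊂ (T.scale C hC).toSet ↔ S.toSet ⊂ T.toSet := by
  have hC0 : (C : ℂ) ≠ 0 := by exact_mod_cast hC.ne'
  rw [toSet_scale, toSet_scale]
  exact (mul_right_injective₀ hC0).injOn.image_ssubset_image_iff (subset_univ _) (subset_univ _)

lemma center_scale (hC : 0 < C) (S : DySquare) :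
    (S.scale C hC).center = (C : ℂ) * S.center := by
  apply Complex.ext <;> simp [center, scale] <;> ring

lemma IsDyadic.scale_two_zpow {S : DySquare} (hS : S.IsDyadic) (k : ℤ) :
    (S.scale (2 ^ k) (zpow_pos two_pos k)).IsDyadic := by
  obtain ⟨n, hside, p, q, hx, hy⟩ := hS
  have hpow : (2 : ℝ) ^ k * 2 ^ (-n) = 2 ^ (-(n - k)) := by
    rw [← zpow_add₀ two_ne_zero]; ring_nf
  refine ⟨n - k, ?_, p, q, ?_, ?_⟩ <;> simp only [scale, hside, hx, hy, ← hpow] <;> ring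

lemma isDyadic_scale_iff {k : ℤ} (hCk : C = 2 ^ k) (hC : 0 < C) (S : DySquare) :
    (S.scale C hC).IsDyadic ↔ S.IsDyadic := by
  subst hCk
  refine ⟨fun h => ?_, fun h => h.scale_two_zpow k⟩
  simpa [scale_scale_inv] using h.scale_two_zpow (-k)

end DySquare

lemma circleAvg_comp_div {C : ℝ} (hC : C ≠ 0) (h : ℂ → ℝ) (r : ℝ) (z : ℂ) :
    circleAvg (fun u => h (u / (C : ℂ))) (C * r) ((C : ℂ) * z) = circleAvg h r z := by
  have hC0 : (C : ℂ) ≠ 0 := by exact_mod_cast hC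
  simp only [circleAvg, Complex.ofReal_mul, mul_assoc, ← mul_add, mul_div_cancel_left₀ _ hC0]

lemma circleAvg_sub_const {h : ℂ → ℝ} (hcont : Continuous h) (a r : ℝ) (z : ℂ) :
    circleAvg (fun u => h u - a) r z = circleAvg h r z - a := by
  have hint : IntervalIntegrable (fun θ : ℝ => h (z + r * Complex.exp (θ * Complex.I)))
      volume 0 (2 * π) :=
    (hcont.comp (by fun_prop)).intervalIntegrable _ _
  rw [circleAvg, circleAvg, intervalIntegral.integral_sub hint intervalIntegrable_const,
    intervalIntegral.integral_const, sub_zero, smul_eq_mul, mul_sub,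
    inv_mul_cancel_left₀ (by positivity)]

lemma mass_scale {C : ℝ} (hC : 0 < C) {h : ℂ → ℝ} (hcont : Continuous h) (Q a : ℝ)
    (S : DySquare) :
    Mass (fun u => h (u / (C : ℂ)) - a) Q (S.scale C hC) = C ^ Q * exp (-a) * Mass h Q S := by
  have hside : (S.scale C hC).side / 2 = C * (S.side / 2) := mul_div_assoc _ _ _
  have hcirc := circleAvg_sub_const (h := fun u => h (u / C)) (by fun_prop) a
    (C * (S.side / 2)) ((C : ℂ) * S.center)
  rw [Mass, Mass, DySquare.center_scale, hside, hcirc, circleAvg_comp_div hC.ne', sub_eq_add_neg,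
    exp_add, DySquare.scale, mul_rpow hC.le S.side_pos.le]
  ring

section Scaling

variable {k : ℤ} {C : ℝ} {h : ℂ → ℝ} {Q a ε : ℝ} {U : Set ℂ}

lemma scale_mem_tiling_iff (hCk : C = 2 ^ k) (hC : 0 < C) (hcont : Continuous h) (S : DySquare) :
    S.scale C hC ∈ Tiling (fun u => h (u / (C : ℂ)) - a) Q (C ^ Q * exp (-a) * ε)
        ((fun w => (C : ℂ) * w) '' U) ↔ S ∈ Tiling h Q ε U := by
  have hκ : 0 < C ^ Q * exp (-a) := by positivity
  have hinj := mul_right_injective₀ (show (C : ℂ) ≠ 0 by exact_mod_cast hC.ne')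
  simp only [Tiling, mem_ofPred_eq, DySquare.isDyadic_scale_iff hCk, DySquare.toSet_scale,
    image_subset_image_iff hinj, mass_scale hC hcont, mul_le_mul_iff_right₀ hκ]
  refine and_congr_right fun _ => and_congr_right fun _ => and_congr_right fun _ => ?_
  rw [(DySquare.scale_surjective hC).forall]
  simp only [DySquare.isDyadic_scale_iff hCk, DySquare.toSet_scale, ssubset_def,
    image_subset_image_iff hinj, mass_scale hC hcont, mul_lt_mul_iff_right₀ hκ]

lemma hasChain_scale_iff (hCk : C = 2 ^ k) (hC : 0 < C) (hcont : Continuous h)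
    (z w : ℂ) (n : ℕ) :
    HasChain (fun u => h (u / (C : ℂ)) - a) Q (C ^ Q * exp (-a) * ε)
        ((fun w => (C : ℂ) * w) '' U) ((C : ℂ) * z) ((C : ℂ) * w) n ↔
      HasChain h Q ε U z w n := by
  have hinj := mul_right_injective₀ (show (C : ℂ) ≠ 0 by exact_mod_cast hC.ne')
  rw [HasChain, ((DySquare.scale_surjective hC).comp_left (α := ℕ)).exists]
  simp only [HasChain, Function.comp_apply, scale_mem_tiling_iff hCk hC hcont,
    DySquare.toSet_scale, hinj.mem_set_image, ← image_inter hinj, image_nontrivial hinj]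

lemma gDist_scale (hCk : C = 2 ^ k) (hC : 0 < C) (hcont : Continuous h) (z w : ℂ) :
    GDist (fun u => h (u / (C : ℂ)) - a) Q (C ^ Q * exp (-a) * ε)
        ((fun w => (C : ℂ) * w) '' U) ((C : ℂ) * z) ((C : ℂ) * w) = GDist h Q ε U z w := by
  simp only [GDist, hasChain_scale_iff hCk hC hcont]

end Scaling

theorem tiling_exact_scaling_general
    (Q : ℝ) (h : ℂ → ℝ) (hcont : Continuous h)
    (ε : ℝ) (k : ℤ) (C : ℝ) (hC : C = 2 ^ k) (hCpos : 0 < C) (a : ℝ)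
    (ε' : ℝ) (hε' : ε' = C ^ Q * Real.exp (-a) * ε) :
    (∀ S : DySquare,
        S ∈ Tiling h Q ε Set.univ ↔
          S.scale C hCpos ∈ Tiling (fun u => h (u / (C : ℂ)) - a) Q ε' Set.univ) ∧
    (∀ z w : ℂ,
        GDist (fun u => h (u / (C : ℂ)) - a) Q ε' Set.univ ((C : ℂ) * z) ((C : ℂ) * w) =
          GDist h Q ε Set.univ z w) := by
  have hU : (fun w : ℂ => (C : ℂ) * w) '' univ = univ :=
    image_univ_of_surjective (mul_left_surjective₀ (by exact_mod_cast hCpos.ne'))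
  subst hε'
  exact ⟨fun S => by
      simpa only [hU] using (scale_mem_tiling_iff hC hCpos hcont (U := univ) S).symm,
    fun z w => by simpa only [hU] using gDist_scale hC hCpos hcont (U := univ) z w⟩

/-- The exact scaling relation (6.2): for `g = h(·/C) - a` with `C = 2^k` dyadic and
`ε' = C^Q e^{-a} ε`, a dyadic square `S` belongs to `𝒮_h^ε(ℂ)` iff `CS` belongs to
`𝒮_g^{ε'}(ℂ)`; consequently `D_g^{ε'}(Cz, Cw) = D_h^ε(z, w)` for all `z, w`. -/
theorem tiling_exact_scaling
    (Q : ℝ) (hQ : 0 < Q) (h : ℂ → ℝ) (hcont : Continuous h)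
    (ε : ℝ) (hε : 0 < ε) (k : ℤ) (C : ℝ) (hC : C = 2 ^ k) (hCpos : 0 < C) (a : ℝ)
    (ε' : ℝ) (hε' : ε' = C ^ Q * Real.exp (-a) * ε) :
    (∀ S : DySquare,
        S ∈ Tiling h Q ε Set.univ ↔
          S.scale C hCpos ∈ Tiling (fun u => h (u / (C : ℂ)) - a) Q ε' Set.univ) ∧
    (∀ z w : ℂ,
        GDist (fun u => h (u / (C : ℂ)) - a) Q ε' Set.univ ((C : ℂ) * z) ((C : ℂ) * w) =
          GDist h Q ε Set.univ z w) :=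
  tiling_exact_scaling_general Q h hcont ε k C hC hCpos a ε' hε'

end
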